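/- For any three-player impartial game G and Nim heap of size n ≥ 2, the sum G + n is never a P-game; and for n ≥ 3, the sum G + n is never an O-game. -/
import Mathlib


/-- Three-player impartial games: well-founded game trees. -/
inductive G3 : Type 1 where
  | mk : (ι : Type) → (ι → G3) → G3

namespace G3

/-- The index type of options (moves) of a game. -/
def moves : G3 → Type
  | mk ι _ => ι

/-- The option of a game corresponding to a move. -/
def moveFn : (g : G3) → moves g → G3
  | mk _ f => f

/-- Disjunctive sum: move in exactly one component. -/
noncomputable def add : G3 → G3 → G3 :=
  G3.rec (fun ι f ihf =>
    G3.rec (fun κ g ihg =>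
      mk (ι ⊕ κ) (fun x =>
        match x with
        | Sum.inl i => ihf i (mk κ g)
        | Sum.inr j => ihg j)))

/-- The four outcome types of a three-player impartial game. -/
inductive PType : Type
  | N | O | P | Q
deriving DecidableEq

open Classical in
/-- The type of a game: `N` iff some option is a `P`-game; `O` iff it has at least
one option and all options are `N`-games; `P` iff all options are `O`-games;
`Q` otherwise. -/
noncomputable def typ : G3 → PType
  | mk ι f =>
    if ∃ i, typ (f i) = PType.P then PType.N
    else if Nonempty ι ∧ ∀ i, typ (f i) = PType.N then PType.O
    else if ∀ i, typ (f i) = PType.O then PType.P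
    else PType.Q

/-- The Nim heap of size `n`: options are heaps of sizes `0, …, n-1`. -/
def nim : ℕ → G3
  | n => mk (Fin n) (fun i => nim i)
termination_by n => n
decreasing_by exact i.isLt

/-- The sum of `n` Nim heaps of size 1. -/
noncomputable def ones : ℕ → G3
  | 0 => nim 0
  | n + 1 => add (ones n) (nim 1)

lemma typ_P_all (ι : Type) (f : ι → G3) (h : typ (mk ι f) = PType.P) :
    ∀ i, typ (f i) = PType.O := by
  rw [typ] at h
  split_ifs at h with h1 h2 h3
  · exact h3

lemma typ_O_all (ι : Type) (f : ι → G3) (h : typ (mk ι f) = PType.O) :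
    ∀ i, typ (f i) = PType.N := by
  rw [typ] at h
  split_ifs at h with h1 h2 h3 <;> first | exact h2.2 | simp_all

lemma typ_N_ex (ι : Type) (f : ι → G3) (h : typ (mk ι f) = PType.N) :
    ∃ i, typ (f i) = PType.P := by
  rw [typ] at h
  split_ifs at h with h1 h2 h3 <;> first | exact h1 | simp_all

lemma add_mk (ι κ : Type) (f : ι → G3) (g : κ → G3) :
    add (mk ι f) (mk κ g) = mk (ι ⊕ κ) (fun x =>
      match x with
      | Sum.inl i => add (f i) (mk κ g)
      | Sum.inr j => add (mk ι f) (g j)) := rfl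

lemma add_mk' (ι κ : Type) (f : ι → G3) (g : κ → G3) :
    add (mk ι f) (mk κ g) = mk (ι ⊕ κ)
      (Sum.elim (fun i => add (f i) (mk κ g)) (fun j => add (mk ι f) (g j))) := by
  rw [add_mk]
  congr 1
  funext x
  cases x <;> rfl

lemma add_nim_eq (ι : Type) (f : ι → G3) (n : ℕ) :
    add (mk ι f) (nim n) = mk (ι ⊕ Fin n)
      (Sum.elim (fun i => add (f i) (nim n)) (fun j : Fin n => add (mk ι f) (nim ↑j))) := by
  have h : nim n = mk (Fin n) (fun i : Fin n => nim ↑i) := by rw [nim]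
  rw [h]
  exact add_mk' ι (Fin n) f (fun i => nim ↑i)

theorem add_heap_not_P_not_O (G : G3) (n : ℕ) :
    (2 ≤ n → typ (add G (nim n)) ≠ PType.P) ∧
    (3 ≤ n → typ (add G (nim n)) ≠ PType.O) := by
  obtain ⟨ι, f⟩ := G
  rw [add_nim_eq]
  constructor
  · intro hn hP
    have hall := typ_P_all _ _ hP
    have hk : ∀ k, k < n → typ (add (mk ι f) (nim k)) = PType.O := fun k h => by
      simpa using hall (Sum.inr ⟨k, h⟩)
    have h1 := hk 1 (by omega)
    have h0 := hk 0 (by omega)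
    rw [add_nim_eq] at h1
    have h0' : typ (add (mk ι f) (nim 0)) = PType.N := by
      simpa using typ_O_all _ _ h1 (Sum.inr ⟨0, one_pos⟩)
    rw [h0'] at h0
    exact PType.noConfusion h0
  · intro hn hO
    have hall := typ_O_all _ _ hO
    have hk : ∀ k, k < n → typ (add (mk ι f) (nim k)) = PType.N := fun k h => by
      simpa using hall (Sum.inr ⟨k, h⟩)
    have h2 := hk 2 (by omega)
    have h1 := hk 1 (by omega)
    have h0 := hk 0 (by omega)
    rw [add_nim_eq] at h2
    obtain ⟨x, hx⟩ := typ_N_ex _ _ h2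
    match x with
    | Sum.inl i =>
      simp only [Sum.elim_inl] at hx
      exact (add_heap_not_P_not_O (f i) 2).1 le_rfl hx
    | Sum.inr ⟨0, _⟩ =>
      simp only [Sum.elim_inr] at hx
      rw [hx] at h0; exact PType.noConfusion h0
    | Sum.inr ⟨1, _⟩ =>
      simp only [Sum.elim_inr] at hx
      rw [hx] at h1; exact PType.noConfusion h1

end G3
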